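/- arXiv:2012.14344 — 5 statements merged into one kernel-verified Lean document; each statement's English description precedes it below -/
import Mathlib

section
/- Let ℓ > 0 and ℓ₂ = ℓ₃ = π. For every κ with 0 < κ < 1/ℓ, the quantity cosh(κπ) cosh(κℓ₁) + sinh(κπ) sinh(κℓ₁) · (κ⁴ℓ⁴ − 2κ²ℓ² + 5)/(4 − 4κ²ℓ²) is strictly greater than 1 for any ℓ₁ > 0. -/
/-! The rational factor exceeds 1 because its numerator minus its denominator is
`(κ²ℓ² + 1)²`; once the factor is at least 1, the expression dominates
`cosh κπ cosh κℓ₁ + sinh κπ sinh κℓ₁ = cosh (κ(π + ℓ₁)) > 1`. -/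

open Real

theorem one_lt_div_of_sq_lt_one {x : ℝ} (hx : x ^ 2 < 1) :
    1 < (x ^ 4 - 2 * x ^ 2 + 5) / (4 - 4 * x ^ 2) := by
  have hden : 0 < 4 - 4 * x ^ 2 := by linarith
  rw [one_lt_div hden]
  nlinarith [sq_nonneg (x ^ 2 + 1)]

theorem one_lt_cosh_mul_cosh_add_sinh_mul_sinh_mul {a b c : ℝ} (ha : 0 < a) (hb : 0 < b)
    (hc : 1 ≤ c) : 1 < cosh a * cosh b + sinh a * sinh b * c := by
  have hsinh : 0 ≤ sinh a * sinh b := (mul_pos (sinh_pos_iff.mpr ha) (sinh_pos_iff.mpr hb)).le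
  calc 1 < cosh (a + b) := one_lt_cosh.mpr (add_pos ha hb).ne'
    _ = cosh a * cosh b + sinh a * sinh b * 1 := by rw [cosh_add, mul_one]
    _ ≤ cosh a * cosh b + sinh a * sinh b * c := by gcongr

theorem negative_spectrum_symmetric_gap
    (ℓ ℓ₁ κ : ℝ) (hℓ : 0 < ℓ) (hℓ₁ : 0 < ℓ₁)
    (hκ : 0 < κ) (hκ' : κ < 1 / ℓ) :
    cosh (κ * π) * cosh (κ * ℓ₁)
      + sinh (κ * π) * sinh (κ * ℓ₁) *
          ((κ^4 * ℓ^4 - 2 * κ^2 * ℓ^2 + 5) / (4 - 4 * κ^2 * ℓ^2)) > 1 := by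
  have hκℓ : κ * ℓ < 1 := (lt_div_iff₀ hℓ).mp hκ'
  have hsq : (κ * ℓ) ^ 2 < 1 := by nlinarith [mul_pos hκ hℓ]
  have hfactor := one_lt_div_of_sq_lt_one hsq
  simp only [mul_pow, ← mul_assoc] at hfactor
  exact one_lt_cosh_mul_cosh_add_sinh_mul_sinh_mul (mul_pos hκ pi_pos) (mul_pos hκ hℓ₁)
    hfactor.le
end

section
/- Let ℓ, ℓ₁ > 0 and 0 < ℓ₃ < 2π. Define W(κ) = 128 sinh²(πκ)(κ⁴ℓ⁴ − 6κ²ℓ² + (κ²ℓ²+1)² cosh(2κ(π−ℓ₃)) + 1) − (ρ(κ) − τ(κ))², with ρ(κ) = (κ²ℓ²+1)²(sinh κ(2π−ℓ₁) + 2 sinh κℓ₁ cosh 2κ(π−ℓ₃)) and τ(κ) = (κ²ℓ²−3)² sinh κ(ℓ₁+2π) + 8(κ²ℓ²−1) sinh κℓ₁. Then W(κ) = −128π(ℓ₁+2π)((2π−ℓ₃)ℓ₃ + 2πℓ₁)κ⁴ + O(κ⁶) as κ → 0⁺; in particular there exists κ₀ > 0 such that W(κ) < 0 for all 0 < κ <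 κ₀. -/
open Real Filter Asymptotics Topology

/-!
With `sinh x = x + x³/6 + O(x⁵)` and `cosh x = 1 + x²/2 + O(x⁴)` one finds
`sinh² (πκ) = π²κ² + π⁴κ⁴/3 + O(κ⁶)`, that the bracket in `W` is `2 + (2(π-ℓ₃)² - 4ℓ²)κ² + O(κ⁴)`,
and `ρ - τ = -16πκ + Dκ³ + O(κ⁵)` for an explicit `D`. In `W = 128 sinh²(πκ)·bracket - (ρ - τ)²`
the `κ²` terms (both `256π²κ²`) cancel, and the `κ⁴` coefficient, from which `ℓ` drops out, is
`-128π(ℓ₁ + 2π)((2π - ℓ₃)ℓ₃ + 2πℓ₁) < 0`; it dominates the `O(κ⁶)` remainder for small `κ > 0`.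
-/

namespace Asymptotics

variable {𝕜 : Type*} [NormedField 𝕜]

lemma isBigO_pow_pow_of_le {m n : ℕ} (h : m ≤ n) :
    (fun x : 𝕜 => x ^ n) =O[𝓝 0] (· ^ m) := by
  rcases h.eq_or_lt with rfl | h
  · exact isBigO_refl _ _
  · exact (isLittleO_pow_pow h).isBigO

lemma _root_.ContinuousAt.isBigO_pow_zero {q : 𝕜 → 𝕜} (hq : ContinuousAt q 0) :
    q =O[𝓝 0] (· ^ 0) := by
  simpa using hq.tendsto.isBigO_one 𝕜

lemma IsBigO.mul_pow {f g : 𝕜 → 𝕜} {a b n : ℕ} (hf : f =O[𝓝 0] (· ^ a))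
    (hg : g =O[𝓝 0] (· ^ b)) (h : n ≤ a + b) :
    (fun x => f x * g x) =O[𝓝 0] (· ^ n) :=
  (hf.mul hg).trans <| by simpa only [← pow_add] using isBigO_pow_pow_of_le h

lemma IsBigO.continuousAt_mul {f q : 𝕜 → 𝕜} {n : ℕ} (hq : ContinuousAt q 0)
    (hf : f =O[𝓝 0] (· ^ n)) : (fun x => q x * f x) =O[𝓝 0] (· ^ n) :=
  hq.isBigO_pow_zero.mul_pow hf (zero_add n).ge

lemma isBigO_pow_mul {q : 𝕜 → 𝕜} (n : ℕ) (hq : ContinuousAt q 0) :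
    (fun x => x ^ n * q x) =O[𝓝 0] (· ^ n) :=
  ((isBigO_refl (· ^ n) _).continuousAt_mul hq).congr_left fun _ => mul_comm _ _

lemma mul_add_pow_three_isBigO (a : 𝕜) :
    (fun x : 𝕜 => x * a + (x * a) ^ 3 / 6) =O[𝓝 0] (· ^ 1) :=
  (isBigO_pow_mul 1 (q := fun x => a + a ^ 3 * x ^ 2 / 6) (by fun_prop)).congr_left
    fun _ => by ring

lemma IsBigO.comp_mul_right_pow {f : 𝕜 → 𝕜} {n : ℕ} (hf : f =O[𝓝 0] (· ^ n)) (a : 𝕜) :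
    (fun x => f (x * a)) =O[𝓝 0] (· ^ n) := by
  have ha : Tendsto (· * a) (𝓝 (0 : 𝕜)) (𝓝 0) := by
    simpa using (continuous_mul_const a).tendsto 0
  exact (hf.comp_tendsto ha).trans <|
    (isBigO_const_mul_self (a ^ n) (· ^ n) _).congr_left fun x => by
      simp only [Function.comp_apply]
      ring

lemma isBigO_mul_sub_mul {F G f g : 𝕜 → 𝕜} {a b c d n : ℕ}
    (hf : f =O[𝓝 0] (· ^ c)) (hg : g =O[𝓝 0] (· ^ d))
    (hFf : (fun x => F x - f x) =O[𝓝 0] (· ^ a)) (hGg : (fun x => G x - g x) =O[𝓝 0] (· ^ b))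
    (hca : c ≤ a) (hcb : n ≤ c + b) (had : n ≤ a + d) :
    (fun x => F x * G x - f x * g x) =O[𝓝 0] (· ^ n) := by
  have hF : F =O[𝓝 0] (· ^ c) :=
    ((hFf.trans (isBigO_pow_pow_of_le hca)).add hf).congr_left fun _ => sub_add_cancel _ _
  exact ((hF.mul_pow hGg hcb).add (hFf.mul_pow hg had)).congr_left fun _ => by ring

lemma mul_mul_sub_sq_isBigO {S B R : 𝕜 → 𝕜} {c s₂ s₄ b₀ b₂ r₁ r₃ : 𝕜}
    (hS : (fun x => S x - (s₂ * x ^ 2 + s₄ * x ^ 4)) =O[𝓝 0] (· ^ 6))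
    (hB : (fun x => B x - (b₀ + b₂ * x ^ 2)) =O[𝓝 0] (· ^ 4))
    (hR : (fun x => R x - (r₁ * x + r₃ * x ^ 3)) =O[𝓝 0] (· ^ 5)) :
    (fun x => c * S x * B x - R x ^ 2 - ((c * s₂ * b₀ - r₁ ^ 2) * x ^ 2
      + (c * (s₂ * b₂ + s₄ * b₀) - 2 * r₁ * r₃) * x ^ 4)) =O[𝓝 0] (· ^ 6) := by
  have hs : (fun x : 𝕜 => s₂ * x ^ 2 + s₄ * x ^ 4) =O[𝓝 0] (· ^ 2) :=
    (isBigO_pow_mul 2 (q := fun x => s₂ + s₄ * x ^ 2) (by fun_prop)).congr_left fun _ => by ring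
  have hb : (fun x : 𝕜 => b₀ + b₂ * x ^ 2) =O[𝓝 0] (· ^ 0) :=
    ContinuousAt.isBigO_pow_zero (by fun_prop)
  have hr : (fun x : 𝕜 => r₁ * x + r₃ * x ^ 3) =O[𝓝 0] (· ^ 1) :=
    (isBigO_pow_mul 1 (q := fun x => r₁ + r₃ * x ^ 2) (by fun_prop)).congr_left fun _ => by ring
  have hSB := isBigO_mul_sub_mul hs hb hS hB (by norm_num) le_rfl le_rfl
  have hRR := isBigO_mul_sub_mul hr hr hR hR (by norm_num) le_rfl le_rfl
  have hrest := isBigO_pow_mul 6 (q := fun _ : 𝕜 => c * s₄ * b₂ - r₃ ^ 2) continuousAt_const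
  exact ((hSB.const_mul_left c).sub hRR |>.add hrest).congr_left fun _ => by ring

end Asymptotics

namespace Real

lemma sinh_sub_cubic_isBigO_pow : (fun x => sinh x - (x + x ^ 3 / 6)) =O[𝓝 0] (· ^ 5) := by
  have h := exp_sub_sum_range_isBigO_pow 5
  refine ((h.sub (h.comp_mul_right_pow (-1))).const_mul_left (1 / 2)).congr_left fun x => ?_
  simp only [Finset.sum_range_succ, Finset.sum_range_zero, sinh_eq, Nat.factorial,
    Nat.succ_eq_add_one, mul_neg_one]
  push_cast
  ring

lemma cosh_sub_quadratic_isBigO_pow : (fun x => cosh x - (1 + x ^ 2 / 2)) =O[𝓝 0] (· ^ 4) := by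
  have h := exp_sub_sum_range_isBigO_pow 4
  refine ((h.add (h.comp_mul_right_pow (-1))).const_mul_left (1 / 2)).congr_left fun x => ?_
  simp only [Finset.sum_range_succ, Finset.sum_range_zero, cosh_eq, Nat.factorial,
    Nat.succ_eq_add_one, mul_neg_one]
  push_cast
  ring

end Real

lemma sinh_mul_sq_sub_isBigO (a : ℝ) :
    (fun x => sinh (a * x) ^ 2 - (a ^ 2 * x ^ 2 + a ^ 4 / 3 * x ^ 4)) =O[𝓝 0] (· ^ 6) := by
  have hσ := mul_add_pow_three_isBigO a
  have h := Real.sinh_sub_cubic_isBigO_pow.comp_mul_right_pow a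
  have hsq := isBigO_mul_sub_mul hσ hσ h h (by norm_num) le_rfl le_rfl
  refine (hsq.add (isBigO_pow_mul 6 (q := fun _ => a ^ 6 / 36) continuousAt_const)).congr_left
    fun x => ?_
  rw [mul_comm a x]
  ring

lemma cosh_two_mul_mul_sub_isBigO (d : ℝ) :
    (fun x => cosh (2 * x * d) - (1 + 2 * d ^ 2 * x ^ 2)) =O[𝓝 0] (· ^ 4) :=
  (Real.cosh_sub_quadratic_isBigO_pow.comp_mul_right_pow (2 * d)).congr_left fun x => by
    rw [show x * (2 * d) = 2 * x * d by ring]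
    ring

lemma band_bracket_sub_isBigO (ℓ d : ℝ) :
    (fun x => x ^ 4 * ℓ ^ 4 - 6 * x ^ 2 * ℓ ^ 2 + (x ^ 2 * ℓ ^ 2 + 1) ^ 2 * cosh (2 * x * d) + 1
      - (2 + (2 * d ^ 2 - 4 * ℓ ^ 2) * x ^ 2)) =O[𝓝 0] (· ^ 4) := by
  have hc := (cosh_two_mul_mul_sub_isBigO d).continuousAt_mul
    (q := fun x => (x ^ 2 * ℓ ^ 2 + 1) ^ 2) (by fun_prop)
  have hpoly := isBigO_pow_mul 4 (q := fun x => 2 * ℓ ^ 4 + 4 * d ^ 2 * ℓ ^ 2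
    + 2 * d ^ 2 * ℓ ^ 4 * x ^ 2) (by fun_prop)
  exact (hc.add hpoly).congr_left fun x => by ring

lemma band_rho_sub_tau_sub_isBigO (ℓ ℓ₁ ℓ₃ : ℝ) :
    (fun κ => (κ ^ 2 * ℓ ^ 2 + 1) ^ 2 *
        (sinh (κ * (2 * π - ℓ₁)) + 2 * sinh (κ * ℓ₁) * cosh (2 * κ * (π - ℓ₃)))
      - ((κ ^ 2 * ℓ ^ 2 - 3) ^ 2 * sinh (κ * (ℓ₁ + 2 * π)) + 8 * (κ ^ 2 * ℓ ^ 2 - 1) * sinh (κ * ℓ₁))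
      - (-16 * π * κ + (16 * π * ℓ ^ 2 - 32 * π ^ 3 / 3 - 16 * π ^ 2 * ℓ₁ - 8 * π * ℓ₁ ^ 2
          - 8 * π * ℓ₁ * ℓ₃ + 4 * ℓ₁ * ℓ₃ ^ 2) * κ ^ 3)) =O[𝓝 0] (· ^ 5) := by
  have hσ (a : ℝ) := Real.sinh_sub_cubic_isBigO_pow.comp_mul_right_pow a
  have hsc := isBigO_mul_sub_mul (mul_add_pow_three_isBigO ℓ₁)
    (ContinuousAt.isBigO_pow_zero (q := fun x => 1 + 2 * (π - ℓ₃) ^ 2 * x ^ 2) (by fun_prop))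
    (hσ ℓ₁) (cosh_two_mul_mul_sub_isBigO (π - ℓ₃)) (by norm_num) le_rfl le_rfl
  -- what the Taylor polynomials leave beyond `-16πκ + Dκ³` is `κ⁵` times this polynomial
  have hpoly := isBigO_pow_mul 5 (q := fun x =>
    let L := ℓ ^ 2
    let w := ℓ₁ + 2 * π
    let p₁ := 2 * π - ℓ₁ + 2 * ℓ₁
    let p₃ := (2 * π - ℓ₁) ^ 3 / 6 + ℓ₁ ^ 3 / 3 + 4 * ℓ₁ * (π - ℓ₃) ^ 2
    let p₅ := 2 * ℓ₁ ^ 3 * (π - ℓ₃) ^ 2 / 3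
    (x ^ 2 * L + 1) ^ 2 * p₅ + (2 * L + L ^ 2 * x ^ 2) * p₃ + L ^ 2 * p₁
      - (L ^ 2 * w - L * w ^ 3) - L ^ 2 * w ^ 3 * x ^ 2 / 6 - 4 * L * ℓ₁ ^ 3 / 3) (by fun_prop)
  have hρu := (hσ (2 * π - ℓ₁)).continuousAt_mul
    (q := fun κ => (κ ^ 2 * ℓ ^ 2 + 1) ^ 2) (by fun_prop)
  have hρvc := hsc.continuousAt_mul (q := fun κ => 2 * (κ ^ 2 * ℓ ^ 2 + 1) ^ 2) (by fun_prop)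
  have hτw := (hσ (ℓ₁ + 2 * π)).continuousAt_mul
    (q := fun κ => (κ ^ 2 * ℓ ^ 2 - 3) ^ 2) (by fun_prop)
  have hτv := (hσ ℓ₁).continuousAt_mul (q := fun κ => 8 * (κ ^ 2 * ℓ ^ 2 - 1)) (by fun_prop)
  exact ((((hρu.add hρvc).sub hτw).sub hτv).add hpoly).congr_left fun κ => by ring

lemma eventually_neg_of_add_mul_pow_isBigO {f : ℝ → ℝ} {C : ℝ} {m n : ℕ} (hC : 0 < C)
    (hmn : m < n) (h : (fun x => f x + C * x ^ m) =O[𝓝[>] 0] (· ^ n)) :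
    ∀ᶠ x in 𝓝[>] 0, f x < 0 := by
  have ho := h.trans_isLittleO ((isLittleO_pow_pow hmn).mono nhdsWithin_le_nhds)
  filter_upwards [ho.bound (half_pos hC), self_mem_nhdsWithin] with x hx (hx0 : 0 < x)
  have hxm : 0 < x ^ m := pow_pos hx0 m
  rw [Real.norm_eq_abs, Real.norm_of_nonneg hxm.le] at hx
  nlinarith [le_abs_self (f x + C * x ^ m), mul_pos hC hxm]

theorem negative_band_condition_near_zero_general
    (ℓ ℓ₁ ℓ₃ : ℝ) (hℓ₁ : 0 < ℓ₁) (hℓ₃ : 0 < ℓ₃) (hℓ₃' : ℓ₃ < 2 * π)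
    (ρ τ W : ℝ → ℝ)
    (hρ : ∀ κ, ρ κ = (κ^2 * ℓ^2 + 1)^2 *
        (sinh (κ * (2 * π - ℓ₁)) + 2 * sinh (κ * ℓ₁) * cosh (2 * κ * (π - ℓ₃))))
    (hτ : ∀ κ, τ κ = (κ^2 * ℓ^2 - 3)^2 * sinh (κ * (ℓ₁ + 2 * π))
        + 8 * (κ^2 * ℓ^2 - 1) * sinh (κ * ℓ₁))
    (hW : ∀ κ, W κ = 128 * (sinh (π * κ))^2 *
        (κ^4 * ℓ^4 - 6 * κ^2 * ℓ^2 + (κ^2 * ℓ^2 + 1)^2 * cosh (2 * κ * (π - ℓ₃)) + 1)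
        - (ρ κ - τ κ)^2) :
    (fun κ => W κ + 128 * π * (ℓ₁ + 2 * π) * ((2 * π - ℓ₃) * ℓ₃ + 2 * π * ℓ₁) * κ^4)
        =O[nhdsWithin 0 (Set.Ioi 0)] (fun κ => κ^6) ∧
      ∃ κ₀ > 0, ∀ κ, 0 < κ → κ < κ₀ → W κ < 0 := by
  have hexp := mul_mul_sub_sq_isBigO (c := 128) (sinh_mul_sq_sub_isBigO π)
    (band_bracket_sub_isBigO ℓ (π - ℓ₃)) (band_rho_sub_tau_sub_isBigO ℓ ℓ₁ ℓ₃)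
  have hW6 : (fun κ => W κ + 128 * π * (ℓ₁ + 2 * π) * ((2 * π - ℓ₃) * ℓ₃ + 2 * π * ℓ₁) * κ^4)
      =O[𝓝[>] 0] (· ^ 6) :=
    (hexp.congr_left fun κ => by rw [hW, hρ, hτ]; ring).mono nhdsWithin_le_nhds
  have hC : 0 < 128 * π * (ℓ₁ + 2 * π) * ((2 * π - ℓ₃) * ℓ₃ + 2 * π * ℓ₁) := by
    have := mul_pos (sub_pos.2 hℓ₃') hℓ₃
    positivity
  obtain ⟨κ₀, hκ₀, hneg⟩ :=
    (nhdsGT_basis 0).eventually_iff.1 (eventually_neg_of_add_mul_pow_isBigO hC (by norm_num) hW6)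
  exact ⟨hW6, κ₀, hκ₀, fun κ h₀ h₁ => hneg ⟨h₀, h₁⟩⟩

theorem negative_band_condition_near_zero
    (ℓ ℓ₁ ℓ₃ : ℝ) (hℓ : 0 < ℓ) (hℓ₁ : 0 < ℓ₁) (hℓ₃ : 0 < ℓ₃) (hℓ₃' : ℓ₃ < 2 * π)
    (ρ τ W : ℝ → ℝ)
    (hρ : ∀ κ, ρ κ = (κ^2 * ℓ^2 + 1)^2 *
        (sinh (κ * (2 * π - ℓ₁)) + 2 * sinh (κ * ℓ₁) * cosh (2 * κ * (π - ℓ₃))))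
    (hτ : ∀ κ, τ κ = (κ^2 * ℓ^2 - 3)^2 * sinh (κ * (ℓ₁ + 2 * π))
        + 8 * (κ^2 * ℓ^2 - 1) * sinh (κ * ℓ₁))
    (hW : ∀ κ, W κ = 128 * (sinh (π * κ))^2 *
        (κ^4 * ℓ^4 - 6 * κ^2 * ℓ^2 + (κ^2 * ℓ^2 + 1)^2 * cosh (2 * κ * (π - ℓ₃)) + 1)
        - (ρ κ - τ κ)^2) :
    (fun κ => W κ + 128 * π * (ℓ₁ + 2 * π) * ((2 * π - ℓ₃) * ℓ₃ + 2 * π * ℓ₁) * κ^4)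
        =O[nhdsWithin 0 (Set.Ioi 0)] (fun κ => κ^6) ∧
      ∃ κ₀ > 0, ∀ κ, 0 < κ → κ < κ₀ → W κ < 0 :=
  negative_band_condition_near_zero_general ℓ ℓ₁ ℓ₃ hℓ₁ hℓ₃ hℓ₃' ρ τ W hρ hτ hW
end

section
/- With f as above, f(κ) = 16πκ + (20π² − 4(π−ℓ₃)²)κ² + O(κ³) as κ → 0⁺; in particular f(κ) > 0 for all sufficiently small κ > 0, and f(κ) → +∞ as κ → ∞. -/
open Real Filter Asymptotics Topology

/-! Near `0`, expand every exponential (and `cosh`) to second order: the Taylor polynomials give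
`16πκ + (20π² - 4(π - ℓ₃)²)κ²` plus a polynomial multiple of `κ³`, and each second-order
remainder is `O(κ³)`; the linear term `16πκ` then forces positivity for small `κ`.
At infinity, `cosh (2κ(π - ℓ₃)) ≤ exp (2|π - ℓ₃|κ)` with `|π - ℓ₃| < π`, so the spare factor
`exp (2(π - |π - ℓ₃|)κ)` lets `exp (2πκ)(κ²ℓ² - 3)²` absorb the `cosh` term, leaving
`f κ ≥ 8(κ²ℓ² - 1)`. -/

noncomputable def expRemainder (x : ℝ) : ℝ := exp x - (1 + x + x ^ 2 / 2)

lemma abs_expRemainder_le {x : ℝ} (hx : |x| ≤ 1) : |expRemainder x| ≤ |x| ^ 3 := by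
  have h := Real.exp_bound hx (n := 3) (by norm_num)
  norm_num [Finset.sum_range_succ, Nat.factorial] at h
  exact h.trans (by nlinarith [pow_nonneg (abs_nonneg x) 3])

lemma expRemainder_isBigO : expRemainder =O[𝓝 0] (· ^ 3) :=
  IsBigO.of_bound 1 <| (Metric.eventually_nhds_iff.2 ⟨1, one_pos, fun _ h => h.le⟩).mono
    fun x hx => by simpa [norm_pow] using abs_expRemainder_le (by simpa using hx)

lemma expRemainder_comp_mul_isBigO (b : ℝ) :
    (fun x => expRemainder (b * x)) =O[𝓝 0] (· ^ 3) := by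
  have hb : Tendsto (b * ·) (𝓝 0) (𝓝 0) := by
    simpa using (continuous_const_mul b).tendsto 0
  refine (expRemainder_isBigO.comp_tendsto hb).trans ?_
  simpa [Function.comp_def, mul_pow] using isBigO_const_mul_self (b ^ 3) (· ^ 3) (𝓝 (0 : ℝ))

noncomputable def bandFunction (ℓ ℓ₃ κ : ℝ) : ℝ :=
  exp (2 * π * κ) * (κ ^ 2 * ℓ ^ 2 - 3) ^ 2 + 8 * (κ ^ 2 * ℓ ^ 2 - 1)
    + (κ ^ 2 * ℓ ^ 2 + 1) ^ 2 * (exp (-(2 * π * κ)) - 2 * cosh (2 * κ * (π - ℓ₃)))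

lemma bandFunction_sub_quadratic (ℓ ℓ₃ κ : ℝ) :
    bandFunction ℓ ℓ₃ κ - (16 * π * κ + (20 * π ^ 2 - 4 * (π - ℓ₃) ^ 2) * κ ^ 2)
      = (-16 * π * ℓ ^ 2 - (8 * π ^ 2 + 8 * (π - ℓ₃) ^ 2) * ℓ ^ 2 * κ
          + (4 * π ^ 2 - 4 * (π - ℓ₃) ^ 2) * ℓ ^ 4 * κ ^ 3) * κ ^ 3
        + (κ ^ 2 * ℓ ^ 2 - 3) ^ 2 * expRemainder (2 * π * κ)
        + (κ ^ 2 * ℓ ^ 2 + 1) ^ 2 * (expRemainder (-(2 * π) * κ)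
            - expRemainder (2 * (π - ℓ₃) * κ) - expRemainder (-(2 * (π - ℓ₃)) * κ)) := by
  simp only [bandFunction, expRemainder, cosh_eq]
  ring_nf

lemma bandFunction_sub_quadratic_isBigO (ℓ ℓ₃ : ℝ) :
    (fun κ => bandFunction ℓ ℓ₃ κ - (16 * π * κ + (20 * π ^ 2 - 4 * (π - ℓ₃) ^ 2) * κ ^ 2))
      =O[𝓝 0] (· ^ 3) := by
  have bounded_mul {Q g : ℝ → ℝ} (hQ : Continuous Q) (hg : g =O[𝓝 0] (· ^ 3)) :
      (fun κ => Q κ * g κ) =O[𝓝 0] (· ^ 3) :=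
    (((hQ.tendsto 0).isBigO_one ℝ).mul hg).congr_right (by simp)
  simp_rw [bandFunction_sub_quadratic]
  refine ((bounded_mul (by fun_prop) (isBigO_refl _ _)).add
    (bounded_mul (by fun_prop) (expRemainder_comp_mul_isBigO _))).add
    (bounded_mul (by fun_prop) ?_)
  exact ((expRemainder_comp_mul_isBigO _).sub (expRemainder_comp_mul_isBigO _)).sub
    (expRemainder_comp_mul_isBigO _)

lemma eventually_pos_of_sub_isBigO_cube {g : ℝ → ℝ} {a b : ℝ} (ha : 0 < a)
    (h : (fun x => g x - (a * x + b * x ^ 2)) =O[𝓝[>] 0] (· ^ 3)) :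
    ∀ᶠ x in 𝓝[>] 0, 0 < g x := by
  have hpow {n : ℕ} (hn : 1 < n) : (fun x : ℝ => x ^ n) =o[𝓝[>] 0] id :=
    ((isLittleO_pow_pow hn).mono nhdsWithin_le_nhds).congr_right (by simp)
  have hlin : (fun x => g x - a * x) =o[𝓝[>] 0] id :=
    ((h.trans_isLittleO (hpow (by norm_num))).add ((hpow one_lt_two).const_mul_left b)).congr_left
      (by intro; ring)
  filter_upwards [hlin.def (half_pos ha), self_mem_nhdsWithin] with x hx (hx0 : 0 < x)
  rw [Real.norm_eq_abs, id, Real.norm_of_nonneg hx0.le] at hx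
  nlinarith [(abs_le.1 hx).1]

lemma cosh_le_exp_abs (x : ℝ) : cosh x ≤ exp |x| := by
  rw [← cosh_abs, cosh_eq]
  linarith [exp_le_exp.2 (show -|x| ≤ |x| by linarith [abs_nonneg x])]

lemma eventually_two_mul_cosh_le (ℓ c : ℝ) (hℓ : 0 < ℓ) (hc : |c| < π) :
    ∀ᶠ κ in atTop, 2 * (κ ^ 2 * ℓ ^ 2 + 1) ^ 2 * cosh (2 * κ * c)
      ≤ exp (2 * π * κ) * (κ ^ 2 * ℓ ^ 2 - 3) ^ 2 := by
  have hu : Tendsto (fun κ : ℝ => κ ^ 2 * ℓ ^ 2) atTop atTop :=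
    (tendsto_pow_atTop two_ne_zero).atTop_mul_const (by positivity)
  have he : Tendsto (fun κ => exp (2 * (π - |c|) * κ)) atTop atTop :=
    tendsto_exp_atTop.comp (tendsto_id.const_mul_atTop (by linarith))
  filter_upwards [hu.eventually_ge_atTop 4, he.eventually_ge_atTop 50, eventually_ge_atTop 0]
    with κ hu4 he50 hκ
  set u := κ ^ 2 * ℓ ^ 2
  have hsq : (u + 1) ^ 2 ≤ 25 * (u - 3) ^ 2 := by nlinarith
  calc 2 * (u + 1) ^ 2 * cosh (2 * κ * c) ≤ 2 * (u + 1) ^ 2 * exp (2 * |c| * κ) := by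
        gcongr
        refine (cosh_le_exp_abs _).trans_eq ?_
        rw [abs_mul, abs_mul, abs_two, abs_of_nonneg hκ]
        ring_nf
    _ ≤ 50 * (u - 3) ^ 2 * exp (2 * |c| * κ) := by gcongr ?_ * _; linarith
    _ ≤ exp (2 * (π - |c|) * κ) * (u - 3) ^ 2 * exp (2 * |c| * κ) := by gcongr
    _ = exp (2 * π * κ) * (u - 3) ^ 2 := by
        rw [mul_right_comm, ← exp_add]
        ring_nf

lemma tendsto_bandFunction_atTop {ℓ ℓ₃ : ℝ} (hℓ : 0 < ℓ) (hℓ₃ : |π - ℓ₃| < π) :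
    Tendsto (bandFunction ℓ ℓ₃) atTop atTop := by
  have hquad : Tendsto (fun κ : ℝ => 8 * (κ ^ 2 * ℓ ^ 2 - 1)) atTop atTop :=
    (tendsto_atTop_add_const_right _ _ <|
      (tendsto_pow_atTop two_ne_zero).atTop_mul_const (by positivity)).const_mul_atTop
      (by norm_num)
  refine tendsto_atTop_mono' _ ?_ hquad
  filter_upwards [eventually_two_mul_cosh_le ℓ (π - ℓ₃) hℓ hℓ₃] with κ hκ
  have := mul_nonneg (sq_nonneg (κ ^ 2 * ℓ ^ 2 + 1)) (exp_pos (-(2 * π * κ))).le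
  rw [bandFunction]
  linarith

theorem f_asymptotics
    (ℓ ℓ₃ : ℝ) (hℓ : 0 < ℓ) (hℓ₃ : 0 < ℓ₃) (hℓ₃' : ℓ₃ < 2 * π)
    (f : ℝ → ℝ)
    (hf : ∀ κ, f κ = exp (2 * π * κ) * (κ^2 * ℓ^2 - 3)^2
        + 8 * (κ^2 * ℓ^2 - 1)
        + (κ^2 * ℓ^2 + 1)^2 * (exp (-(2 * π * κ)) - 2 * cosh (2 * κ * (π - ℓ₃)))) :
    ((fun κ => f κ - (16 * π * κ + (20 * π^2 - 4 * (π - ℓ₃)^2) * κ^2))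
        =O[nhdsWithin 0 (Set.Ioi 0)] (fun κ => κ^3)) ∧
    (∃ κ₀ > 0, ∀ κ, 0 < κ → κ < κ₀ → f κ > 0) ∧
    Tendsto f atTop atTop := by
  obtain rfl : f = bandFunction ℓ ℓ₃ := funext hf
  have hbigO := (bandFunction_sub_quadratic_isBigO ℓ ℓ₃).mono (nhdsWithin_le_nhds (s := Set.Ioi 0))
  obtain ⟨κ₀, hκ₀, hpos⟩ := (nhdsGT_basis 0).eventually_iff.1
    (eventually_pos_of_sub_isBigO_cube (by positivity) hbigO)
  exact ⟨hbigO, ⟨κ₀, hκ₀, fun κ h0 h1 => hpos ⟨h0, h1⟩⟩,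
    tendsto_bandFunction_atTop hℓ (abs_lt.2 ⟨by linarith, by linarith⟩)⟩
end

section
/- Let ℓ > 0, 0 < ℓ₃ < 2π, k > 0. There exists θ such that (k²ℓ²+1)(cos θ cos k(π−ℓ₃) − cos πk) + 2kℓ sin θ sin k(π−ℓ₃) = 0 if and only if 4k²ℓ² − (k²ℓ²+1)² cos 2πk + (k²ℓ²−1)² cos 2k(π−ℓ₃) ≥ 0. -/
open Real

lemma exists_cos_sin_eq (a b c : ℝ) :
    (∃ θ : ℝ, a * cos θ + b * sin θ = c) ↔ c ^ 2 ≤ a ^ 2 + b ^ 2 := by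
  constructor
  · rintro ⟨θ, h⟩
    have e : a ^ 2 + b ^ 2 - c ^ 2 = (a * sin θ - b * cos θ) ^ 2 := by
      linear_combination (a * cos θ + b * sin θ + c) * h
        - (a ^ 2 + b ^ 2) * (sin_sq_add_cos_sq θ)
    nlinarith [sq_nonneg (a * sin θ - b * cos θ), e]
  · intro h
    by_cases hab : a = 0 ∧ b = 0
    · obtain ⟨ha, hb⟩ := hab
      have hc : c = 0 := by nlinarith
      refine ⟨0, ?_⟩
      simp [ha, hb, hc]
    · have hpos : 0 < a ^ 2 + b ^ 2 := by
        rcases not_and_or.mp hab with ha | hb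
        · positivity
        · positivity
      set r := Real.sqrt (a ^ 2 + b ^ 2) with hrdef
      have hr : 0 < r := Real.sqrt_pos.mpr hpos
      have hr2 : r ^ 2 = a ^ 2 + b ^ 2 := Real.sq_sqrt hpos.le
      set z : ℂ := ⟨a, b⟩ with hz
      have hz0 : z ≠ 0 := by
        intro h0
        rw [Complex.ext_iff] at h0
        simp only [hz, Complex.zero_re, Complex.zero_im] at h0
        exact hab h0
      have habs : ‖z‖ = r := by
        rw [Complex.norm_def, Complex.normSq_mk]
        ring_nf
        exact hrdef.symm
      have hcosθ : Real.cos (Complex.arg z) = a / r := by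
        rw [Complex.cos_arg hz0, habs]
      have hsinθ : Real.sin (Complex.arg z) = b / r := by
        rw [Complex.sin_arg, habs]
      have ha' : a = r * Real.cos (Complex.arg z) := by
        rw [hcosθ]; field_simp
      have hb' : b = r * Real.sin (Complex.arg z) := by
        rw [hsinθ]; field_simp
      have hcr : |c / r| ≤ 1 := by
        rw [abs_div, abs_of_pos hr, div_le_one hr]
        have : |c| ^ 2 ≤ r ^ 2 := by rw [sq_abs, hr2]; exact h
        nlinarith [abs_nonneg c]
      rw [abs_le] at hcr
      refine ⟨Complex.arg z + Real.arccos (c / r), ?_⟩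
      have hψ : Real.cos (Real.arccos (c / r)) = c / r :=
        Real.cos_arccos hcr.1 hcr.2
      rw [cos_add, sin_add, ha', hb']
      have hsc := sin_sq_add_cos_sq (Complex.arg z)
      have : c = r * (c / r) := by field_simp
      rw [hψ]
      linear_combination r * (c / r) * hsc - this

theorem band_condition_ell1_zero
    (ℓ ℓ₃ k : ℝ) (hℓ : 0 < ℓ) (hℓ₃ : 0 < ℓ₃) (hℓ₃' : ℓ₃ < 2 * π) (hk : 0 < k) :
    (∃ θ : ℝ, (k^2 * ℓ^2 + 1) * (cos θ * cos (k * (π - ℓ₃)) - cos (π * k))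
        + 2 * k * ℓ * sin θ * sin (k * (π - ℓ₃)) = 0)
      ↔ 4 * k^2 * ℓ^2 - (k^2 * ℓ^2 + 1)^2 * cos (2 * π * k)
          + (k^2 * ℓ^2 - 1)^2 * cos (2 * k * (π - ℓ₃)) ≥ 0 := by
  have h1 : cos (2 * π * k) = 2 * cos (π * k) ^ 2 - 1 := by
    rw [show (2:ℝ) * π * k = 2 * (π * k) by ring, Real.cos_two_mul]
  have h2 : cos (2 * k * (π - ℓ₃)) = 2 * cos (k * (π - ℓ₃)) ^ 2 - 1 := by
    rw [show (2:ℝ) * k * (π - ℓ₃) = 2 * (k * (π - ℓ₃)) by ring, Real.cos_two_mul]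
  have h3 := sin_sq_add_cos_sq (k * (π - ℓ₃))
  have key := exists_cos_sin_eq ((k^2 * ℓ^2 + 1) * cos (k * (π - ℓ₃)))
    (2 * k * ℓ * sin (k * (π - ℓ₃))) ((k^2 * ℓ^2 + 1) * cos (π * k))
  constructor
  · rintro ⟨θ, hθ⟩
    have hle := key.mp ⟨θ, by linarith [hθ]⟩
    rw [ge_iff_le, h1, h2]
    nlinarith [hle, h3]
  · intro h
    obtain ⟨θ, hθ⟩ := key.mpr (by rw [ge_iff_le, h1, h2] at h; nlinarith [h3])
    exact ⟨θ, by linarith [hθ]⟩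
end

section
/- With H as above (ℓ > 0, 0 < ℓ₃ < 2π), H(κ) = −2ℓ₃(2π−ℓ₃)κ² + O(κ⁴) as κ → 0⁺, so H(κ) < 0 for all sufficiently small κ > 0; moreover H(κ) → −∞ as κ → ∞. Also H is invariant under the replacement ℓ₃ ↦ 2π − ℓ₃. -/
open Real Filter Asymptotics

lemma cosh_taylor_bigO : (fun x : ℝ => Real.cosh x - 1 - x^2/2) =O[nhds 0] (fun x : ℝ => x^4) := by
  rw [Asymptotics.isBigO_iff]
  refine ⟨1, ?_⟩
  have h1 : ∀ᶠ x : ℝ in nhds 0, |x| < 1 := by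
    filter_upwards [Metric.ball_mem_nhds (0:ℝ) one_pos] with x hx
    simpa [Real.dist_eq] using hx
  filter_upwards [h1] with x hx
  have hx' : |x| ≤ 1 := le_of_lt hx
  have hb1 := Real.exp_bound hx' (n := 4) (by norm_num)
  have hxneg : |(-x)| ≤ 1 := by rwa [abs_neg]
  have hb2 := Real.exp_bound hxneg (n := 4) (by norm_num)
  simp only [Finset.sum_range_succ, Finset.sum_range_zero, Nat.factorial, abs_neg] at hb1 hb2
  norm_num at hb1 hb2
  have key : Real.cosh x - 1 - x^2/2 =
      ((Real.exp x - (1 + x + x^2/2 + x^3/6)) + (Real.exp (-x) - (1 + -x + x^2/2 + (-x)^3/6)))/2 := by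
    rw [Real.cosh_eq]; ring
  rw [Real.norm_eq_abs, Real.norm_eq_abs, key]
  have habs : |x^4| = |x|^4 := abs_pow x 4
  calc |((Real.exp x - (1 + x + x^2/2 + x^3/6)) + (Real.exp (-x) - (1 + -x + x^2/2 + (-x)^3/6)))/2|
      ≤ (|Real.exp x - (1 + x + x^2/2 + x^3/6)| + |Real.exp (-x) - (1 + -x + x^2/2 + (-x)^3/6)|)/2 := by
        rw [abs_div, abs_two]
        gcongr
        exact abs_add_le _ _
    _ ≤ (|x|^4 * (5/96) + |x|^4 * (5/96))/2 := by have := add_le_add hb1 hb2; linarith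
    _ ≤ 1 * |x^4| := by rw [habs]; nlinarith [pow_nonneg (abs_nonneg x) 4]

lemma cosh_taylor_comp (a : ℝ) :
    (fun κ : ℝ => Real.cosh (a*κ) - 1 - (a*κ)^2/2) =O[nhdsWithin 0 (Set.Ioi 0)] (fun κ => κ^4) := by
  have ht : Tendsto (fun κ : ℝ => a*κ) (nhdsWithin 0 (Set.Ioi 0)) (nhds 0) := by
    have h0 : Tendsto (fun κ : ℝ => a*κ) (nhds 0) (nhds 0) := by
      simpa using (continuous_mul_left a).tendsto (0:ℝ)
    exact h0.mono_left nhdsWithin_le_nhds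
  have h := cosh_taylor_bigO.comp_tendsto ht
  simp only [Function.comp_def] at h
  refine h.trans ?_
  have he : (fun κ : ℝ => (a*κ)^4) = fun κ => a^4 * κ^4 := by funext κ; ring
  rw [he]
  exact Asymptotics.isBigO_const_mul_self _ _ _

set_option maxHeartbeats 1000000 in
theorem H_properties
    (ℓ ℓ₃ : ℝ) (hℓ : 0 < ℓ) (hℓ₃ : 0 < ℓ₃) (hℓ₃' : ℓ₃ < 2 * π)
    (H : ℝ → ℝ → ℝ)
    (hH : ∀ l₃ κ, H l₃ κ = -((κ^2 * ℓ^2 - 1)^2) * cosh (2 * κ * π)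
        + (κ^2 * ℓ^2 + 1)^2 * cosh (2 * κ * (π - l₃)) - 4 * κ^2 * ℓ^2) :
    ((fun κ => H ℓ₃ κ + 2 * ℓ₃ * (2 * π - ℓ₃) * κ^2)
        =O[nhdsWithin 0 (Set.Ioi 0)] (fun κ => κ^4)) ∧
    (∃ κ₀ > 0, ∀ κ, 0 < κ → κ < κ₀ → H ℓ₃ κ < 0) ∧
    Tendsto (H ℓ₃) atTop atBot ∧
    (∀ κ, H (2 * π - ℓ₃) κ = H ℓ₃ κ) := by
  have key : ∀ κ : ℝ, H ℓ₃ κ + 2 * ℓ₃ * (2 * π - ℓ₃) * κ^2 =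
      (2*ℓ^2*(κ^2*ℓ^2*(ℓ₃^2-2*π*ℓ₃) + 2*((π-ℓ₃)^2+π^2))) * κ^4
      + (-((κ^2*ℓ^2-1)^2)) * (Real.cosh ((2*π)*κ) - 1 - ((2*π)*κ)^2/2)
      + ((κ^2*ℓ^2+1)^2) * (Real.cosh ((2*(π-ℓ₃))*κ) - 1 - ((2*(π-ℓ₃))*κ)^2/2) := by
    intro κ
    rw [hH]
    rw [show 2 * κ * π = (2*π)*κ by ring, show 2 * κ * (π - ℓ₃) = (2*(π-ℓ₃))*κ by ring]
    ring
  have part1 : (fun κ => H ℓ₃ κ + 2 * ℓ₃ * (2 * π - ℓ₃) * κ^2)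
      =O[nhdsWithin 0 (Set.Ioi 0)] (fun κ => κ^4) := by
    simp only [key]
    have l := nhdsWithin (0:ℝ) (Set.Ioi 0)
    have hc1 : (fun κ : ℝ => 2*ℓ^2*(κ^2*ℓ^2*(ℓ₃^2-2*π*ℓ₃) + 2*((π-ℓ₃)^2+π^2)))
        =O[nhdsWithin 0 (Set.Ioi 0)] (fun _ => (1:ℝ)) := by
      apply Filter.Tendsto.isBigO_one
      exact ((Continuous.tendsto (by continuity) 0).mono_left nhdsWithin_le_nhds)
    have hc2 : (fun κ : ℝ => -((κ^2*ℓ^2-1)^2)) =O[nhdsWithin 0 (Set.Ioi 0)] (fun _ => (1:ℝ)) := by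
      apply Filter.Tendsto.isBigO_one
      exact ((Continuous.tendsto (by continuity) 0).mono_left nhdsWithin_le_nhds)
    have hc3 : (fun κ : ℝ => (κ^2*ℓ^2+1)^2) =O[nhdsWithin 0 (Set.Ioi 0)] (fun _ => (1:ℝ)) := by
      apply Filter.Tendsto.isBigO_one
      exact ((Continuous.tendsto (by continuity) 0).mono_left nhdsWithin_le_nhds)
    have h4 : (fun κ : ℝ => κ^4) =O[nhdsWithin 0 (Set.Ioi 0)] (fun κ : ℝ => κ^4) :=
      Asymptotics.isBigO_refl _ _
    have t1 := hc1.mul h4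
    have t2 := hc2.mul (cosh_taylor_comp (2*π))
    have t3 := hc3.mul (cosh_taylor_comp (2*(π-ℓ₃)))
    simp only [one_mul] at t1 t2 t3
    exact (t1.add t2).add t3
  refine ⟨part1, ?_, ?_, ?_⟩
  · -- small κ negativity
    have hc : 0 < 2 * ℓ₃ * (2 * π - ℓ₃) := by nlinarith
    obtain ⟨C, hC⟩ := Asymptotics.isBigO_iff.1 part1
    have hsmall : ∀ᶠ κ : ℝ in nhdsWithin 0 (Set.Ioi 0), (C+1) * κ^2 < 2 * ℓ₃ * (2 * π - ℓ₃) := by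
      have ht : Tendsto (fun κ : ℝ => (C+1) * κ^2) (nhdsWithin 0 (Set.Ioi 0)) (nhds 0) := by
        have : Tendsto (fun κ : ℝ => (C+1) * κ^2) (nhds 0) (nhds ((C+1)*0^2)) :=
          Continuous.tendsto (by continuity) 0
        simpa using this.mono_left nhdsWithin_le_nhds
      exact ht.eventually_lt_const hc
    have hcomb := hC.and hsmall
    rw [eventually_nhdsWithin_iff, Metric.eventually_nhds_iff] at hcomb
    obtain ⟨ε, hε, hall⟩ := hcomb
    refine ⟨ε, hε, fun κ hκ hκε => ?_⟩
    have hdist : dist κ 0 < ε := by rw [Real.dist_eq, sub_zero, abs_of_pos hκ]; exact hκε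
    obtain ⟨h1, h2⟩ := hall hdist hκ
    rw [Real.norm_eq_abs, Real.norm_eq_abs] at h1
    have h1' : H ℓ₃ κ + 2 * ℓ₃ * (2 * π - ℓ₃) * κ^2 ≤ C * |κ^4| := (abs_le.1 h1).2
    rw [abs_of_nonneg (by positivity : (0:ℝ) ≤ κ^4)] at h1'
    nlinarith [sq_nonneg κ, pow_pos hκ 2, pow_pos hκ 4]
  · -- tendsto atBot
    set m := |π - ℓ₃| with hm
    have hπ : 0 < π := Real.pi_pos
    have hmπ : m < π := by
      rw [hm, abs_lt]; constructor <;> nlinarith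
    have hm0 : 0 ≤ m := abs_nonneg _
    set d := π - m with hd
    have hd0 : 0 < d := by simp [hd]; linarith
    have htend : Tendsto (fun κ : ℝ => Real.exp (2*κ*d)) atTop atTop := by
      apply Real.tendsto_exp_atTop.comp
      have : Tendsto (fun κ : ℝ => κ * (2*d)) atTop atTop :=
        Filter.Tendsto.atTop_mul_const (by linarith) tendsto_id
      exact this.congr (fun κ => by ring)
    apply tendsto_atBot_mono' atTop (f₁ := fun κ => 4 - Real.exp (2*κ*d)/8)
    · filter_upwards [eventually_ge_atTop (2/ℓ), htend.eventually_ge_atTop 64,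
        eventually_gt_atTop (0:ℝ)] with κ hκℓ hE hκ
      set A := κ^2*ℓ^2 with hA
      have hA4 : 4 ≤ A := by
        have : 2/ℓ * ℓ ≤ κ * ℓ := by gcongr
        rw [div_mul_cancel₀ _ (ne_of_gt hℓ)] at this
        nlinarith
      set M := Real.exp (2*κ*m) with hM
      set E := Real.exp (2*κ*d) with hE'
      have hM1 : 1 ≤ M := Real.one_le_exp (by positivity)
      have hexp : Real.exp (2*κ*π) = M * E := by
        rw [hM, hE', ← Real.exp_add]; congr 1; rw [hd]; ring
      have c1 : M*E/2 ≤ Real.cosh (2*κ*π) := by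
        rw [Real.cosh_eq, ← hexp]
        have := Real.exp_pos (-(2*κ*π))
        linarith
      have c2 : Real.cosh (2*κ*(π-ℓ₃)) ≤ M := by
        rw [Real.cosh_eq, hM]
        have e1 : Real.exp (2*κ*(π-ℓ₃)) ≤ Real.exp (2*κ*m) := by
          apply Real.exp_le_exp.2
          have : π - ℓ₃ ≤ m := le_abs_self _
          nlinarith
        have e2 : Real.exp (-(2*κ*(π-ℓ₃))) ≤ Real.exp (2*κ*m) := by
          apply Real.exp_le_exp.2
          have : -(π - ℓ₃) ≤ m := neg_le_abs _
          nlinarith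
        linarith
      rw [hH]
      rw [show κ^2 * ℓ^2 = A from rfl]
      have E0 : (0:ℝ) < E := Real.exp_pos _
      have M0 : (0:ℝ) < M := Real.exp_pos _
      have t1 : (A-1)^2 * (M*E/2) ≤ (A-1)^2 * Real.cosh (2*κ*π) :=
        mul_le_mul_of_nonneg_left c1 (sq_nonneg _)
      have t2 : (A+1)^2 * Real.cosh (2*κ*(π-ℓ₃)) ≤ (A+1)^2 * M :=
        mul_le_mul_of_nonneg_left c2 (sq_nonneg _)
      have u1 : A^2 * (M*E) / 4 ≤ (A-1)^2 * (M*E/2) := by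
        have h : A^2 ≤ 2*(A-1)^2 := by nlinarith
        nlinarith [mul_pos M0 E0]
      have u2 : (A+1)^2 * M ≤ 2*A^2*M := by
        have h : (A+1)^2 ≤ 2*A^2 := by nlinarith
        nlinarith
      have hB : 1 ≤ A^2*M := by nlinarith
      have hneg : 2 - E/4 ≤ 0 := by linarith
      have hmul : A^2*M*(2-E/4) ≤ 1*(2-E/4) := mul_le_mul_of_nonpos_right hB hneg
      nlinarith [mul_pos M0 E0]
    · have h1 : Tendsto (fun κ : ℝ => Real.exp (2*κ*d)/8 + (-4)) atTop atTop :=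
        tendsto_atTop_add_const_right _ _ (htend.atTop_div_const (by norm_num))
      have h2 := (tendsto_neg_atTop_atBot).comp h1
      exact h2.congr (fun κ => by simp [Function.comp]; ring)
  · -- symmetry
    intro κ
    rw [hH, hH]
    rw [show 2*κ*(π - (2*π - ℓ₃)) = -(2*κ*(π-ℓ₃)) by ring, Real.cosh_neg]
end
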